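/- Fix a finite simple graph G = (V, E) admitting at least one even homomorphism into a complete graph. Let K_n^{±1} denote the complete graph K_n with independent uniformly random edge weights in {−1, +1}, and for a weighting w set t(G, K_n^w) = n^{−|V|} · Σ_{φ : V → V(K_n)} ∏_{ab ∈ E} w(φ(a)φ(b)), where the product is 0 if φ maps some edge of G to a non-edge (i.e., φ(a) = φ(b)). Then E(t(G, K_n^{±1})) = Θ(n^{−p(G)}) as n → ∞: there exist constants c, C > 0 and N such that for all n ≥ N, c·n^{−p(G)} ≤ E(t(G, K_n^{±1})) ≤ C·n^{−p(G)}. -/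

import Mathlib

open MeasureTheory

noncomputable section

open scoped Classical in
/-- A graph homomorphism `f : G → H` is even if for every edge `e` of `H`, the number of
edges of `G` mapped by `f` onto `e` is even. -/
def IsEvenHom {V V' : Type} [Fintype V] [Fintype V'] {G : SimpleGraph V} {H : SimpleGraph V'}
    (f : G →g H) : Prop :=
  ∀ e ∈ H.edgeFinset, Even ((G.edgeFinset.filter (fun e' => Sym2.map (⇑f) e' = e)).card)

open scoped Classical in
/-- `p(G) = min { |V(G)| − |f(V(G))| : f : G → K_n even }`, computed with `n = |V(G)|`
(the value is independent of `n` once `n ≥ |V(G)|`). -/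
noncomputable def pNat {V : Type} [Fintype V] (G : SimpleGraph V) : ℕ :=
  sInf {k : ℕ | ∃ f : G →g (⊤ : SimpleGraph (Fin (Fintype.card V))), IsEvenHom f ∧
    Fintype.card V - (Finset.univ.image ⇑f).card = k}

open scoped Classical in
/-- `t(G, K_n^w) = n^{-|V|} Σ_{φ : V → [n]} ∏_{ab ∈ E} w(φ(a)φ(b))`, where a factor is `0`
if `φ` maps the edge to a non-edge (i.e. collapses it). -/
noncomputable def tRand {V : Type} [Fintype V] (G : SimpleGraph V) (n : ℕ)
    (w : Sym2 (Fin n) → ℝ) : ℝ :=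
  (∑ φ : V → Fin n, ∏ e ∈ G.edgeFinset,
    if (Sym2.map φ e).IsDiag then 0 else w (Sym2.map φ e)) / (n : ℝ) ^ (Fintype.card V)

open scoped Classical in
/-- The expectation of `t(G, K_n^{±1})` over independent uniform `±1` edge weights. -/
noncomputable def expTRand {V : Type} [Fintype V] (G : SimpleGraph V) (n : ℕ) : ℝ :=
  (∑ w : Sym2 (Fin n) → Bool, tRand G n (fun e => if w e then 1 else -1)) /
    2 ^ (Fintype.card (Sym2 (Fin n)))

/-!
Averaging over the signs, the term of `φ : V → [n]` survives exactly when no edge of `G` is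
collapsed and every pair of `[n]` is hit by an even number of edges, i.e. when `φ` is an even
homomorphism; it then contributes `1`. So `E t(G, K_n^{±1})` is the number of even maps
`V → [n]` divided by `n ^ |V|`. Being even depends only on the partition of `V` induced by `φ`,
so even maps can be re-embedded into any large enough target: the largest image of an even map
has `s = |V| - p(G)` points, there are at least `n (n - 1) ⋯ (n - s + 1) ≥ (n / 2) ^ s` even maps
(re-embed an optimal one), and at most `C(n, s) s ^ |V| ≤ n ^ s s ^ |V|` (each has at most `s`
values). Hence `E t = Θ(n ^ (s - |V|)) = Θ(n ^ (-p(G)))`.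
-/

open Finset

lemma Sym2.map_eq_map_iff_of_forall_eq_iff {α β γ : Type*} {f : α → β} {g : α → γ}
    (h : ∀ a b, f a = f b ↔ g a = g b) (x y : Sym2 α) :
    x.map f = y.map f ↔ x.map g = y.map g := by
  induction x using Sym2.ind with | _ a b =>
  induction y using Sym2.ind with | _ c d =>
  simp only [Sym2.map_mk, Sym2.eq_iff, h]

lemma Finset.prod_comp_eq_prod_univ_pow {ι κ M : Type*} [CommMonoid M] [Fintype κ]
    [DecidableEq κ] (s : Finset ι) (f : κ → M) (g : ι → κ) :
    ∏ a ∈ s, f (g a) = ∏ b, f b ^ #{a ∈ s | g a = b} := by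
  rw [prod_comp]
  refine prod_subset (subset_univ _) fun b _ hb => ?_
  rw [filter_false_of_mem fun a ha hab => hb (mem_image.2 ⟨a, ha, hab⟩), card_empty, pow_zero]

lemma Fintype.sum_prod_sign_pow {ι : Type*} [Fintype ι] [DecidableEq ι] (k : ι → ℕ) :
    ∑ w : ι → Bool, ∏ i, (if w i then 1 else -1 : ℝ) ^ k i =
      if ∀ i, Even (k i) then 2 ^ Fintype.card ι else 0 := by
  have h_sum_sign_pow (m : ℕ) :
      ∑ b : Bool, (if b then 1 else -1 : ℝ) ^ m = if Even m then 2 else 0 := by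
    rcases Nat.even_or_odd m with hm | hm
    · simp [hm, hm.neg_one_pow]
    · simp [hm.neg_one_pow, Nat.not_even_iff_odd.mpr hm]
  rw [← Fintype.prod_sum fun i (b : Bool) => (if b then 1 else -1 : ℝ) ^ k i,
    Fintype.prod_congr _ _ fun i => h_sum_sign_pow (k i), Fintype.prod_ite_zero, prod_const,
    card_univ]

lemma Finset.card_filter_card_image_le {V : Type*} [Fintype V] [DecidableEq V] {n k : ℕ}
    (hk : k ≤ n) : #{φ : V → Fin n | #(univ.image φ) ≤ k} ≤ n ^ k * k ^ Fintype.card V := by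
  have h_cover : ({φ : V → Fin n | #(univ.image φ) ≤ k} : Finset _) ⊆
      (powersetCard k univ).biUnion fun S => Fintype.piFinset fun _ : V => S := by
    intro φ hφ
    obtain ⟨S, himage, -, hS⟩ := exists_subsuperset_card_eq (subset_univ (univ.image φ))
      (mem_filter.1 hφ).2 (by simpa using hk)
    exact mem_biUnion.2 ⟨S, mem_powersetCard.2 ⟨subset_univ S, hS⟩,
      Fintype.mem_piFinset.2 fun v => himage (mem_image_of_mem φ (mem_univ v))⟩
  calc #{φ : V → Fin n | #(univ.image φ) ≤ k}
      ≤ ∑ S ∈ powersetCard k univ, #(Fintype.piFinset fun _ : V => S) :=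
        (card_le_card h_cover).trans card_biUnion_le
    _ = n.choose k * k ^ Fintype.card V := by
        rw [sum_congr rfl fun S hS => by
          rw [Fintype.card_piFinset, prod_const, (mem_powersetCard.1 hS).2, card_univ],
          sum_const, card_powersetCard, card_univ, Fintype.card_fin, smul_eq_mul]
    _ ≤ n ^ k * k ^ Fintype.card V := Nat.mul_le_mul_right _ (Nat.choose_le_pow n k)

lemma Nat.div_two_pow_le_descFactorial {n k : ℕ} (h : 2 * k ≤ n) :
    ((n : ℝ) / 2) ^ k ≤ n.descFactorial k := by
  have h_half : (n : ℝ) / 2 ≤ (n + 1 - k : ℕ) := by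
    rw [Nat.cast_sub (by omega)]
    push_cast
    linarith [show (2 * k : ℝ) ≤ n by exact_mod_cast h]
  calc ((n : ℝ) / 2) ^ k ≤ ((n + 1 - k : ℕ) : ℝ) ^ k := by gcongr
    _ ≤ n.descFactorial k := by exact_mod_cast Nat.pow_sub_le_descFactorial n k

lemma zpow_neg_natCast_eq_pow_div {K : Type*} [Field K] {x : K} (hx : x ≠ 0) {k p m : ℕ}
    (h : k + p = m) : x ^ (-(p : ℤ)) = x ^ k / x ^ m := by
  rw [← h, pow_add, zpow_neg, zpow_natCast]
  field_simp

namespace SimpleGraph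

open scoped Classical

variable {V W X : Type} [Fintype V] (G : SimpleGraph V)

/-- An even homomorphism from `G` to the complete graph on `W`, stated for a bare map so that such
maps can be counted and re-embedded. -/
def IsEvenMap (φ : V → W) : Prop :=
  (∀ ⦃a b⦄, G.Adj a b → φ a ≠ φ b) ∧ ∀ p : Sym2 W, Even #{e ∈ G.edgeFinset | e.map φ = p}

variable {G}

def IsEvenMap.toHom {φ : V → W} (h : G.IsEvenMap φ) : G →g (⊤ : SimpleGraph W) :=
  ⟨φ, fun hab => (top_adj _ _).2 (h.1 hab)⟩

@[simp]
lemma IsEvenMap.coe_toHom {φ : V → W} (h : G.IsEvenMap φ) : ⇑h.toHom = φ := rfl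

lemma IsEvenMap.of_forall_eq_iff {φ : V → W} {ψ : V → X} (hφ : G.IsEvenMap φ)
    (h : ∀ a b, ψ a = ψ b ↔ φ a = φ b) : G.IsEvenMap ψ := by
  refine ⟨fun a b hab => (h a b).not.2 (hφ.1 hab), fun p => ?_⟩
  by_cases hp : ∃ e ∈ G.edgeFinset, e.map ψ = p
  · obtain ⟨e₀, -, rfl⟩ := hp
    convert hφ.2 (e₀.map φ) using 2
    exact filter_congr fun e _ => Sym2.map_eq_map_iff_of_forall_eq_iff h e e₀
  · push Not at hp
    rw [filter_false_of_mem hp, card_empty]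
    exact Even.zero

lemma isEvenHom_iff_isEvenMap [Fintype W] (f : G →g (⊤ : SimpleGraph W)) :
    IsEvenHom f ↔ G.IsEvenMap f := by
  refine ⟨fun hf => ⟨fun a b hab => (top_adj _ _).1 (f.map_adj hab), fun p => ?_⟩,
    fun hf e _ => hf.2 e⟩
  by_cases hp : p.IsDiag
  · rw [filter_false_of_mem fun e he hep => ?_, card_empty]
    · exact Even.zero
    have := f.map_mem_edgeSet (mem_edgeFinset.1 he)
    rw [hep, edgeSet_top] at this
    exact this hp
  · exact hf p (by simpa using hp)

lemma sum_prod_edge_sign_eq_ite [Fintype W] [DecidableEq W] (φ : V → W) :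
    ∑ w : Sym2 W → Bool, ∏ e ∈ G.edgeFinset,
        (if (e.map φ).IsDiag then 0 else if w (e.map φ) then 1 else -1 : ℝ) =
      if G.IsEvenMap φ then 2 ^ Fintype.card (Sym2 W) else 0 := by
  by_cases hadj : ∀ ⦃a b⦄, G.Adj a b → φ a ≠ φ b
  · have hdiag : ∀ e ∈ G.edgeFinset, ¬ (e.map φ).IsDiag := by
      intro e he
      induction e using Sym2.ind with | _ a b =>
      simpa using hadj (mem_edgeFinset.1 he)
    rw [sum_congr rfl fun w _ => (prod_congr rfl fun e he => if_neg (hdiag e he)).trans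
      (prod_comp_eq_prod_univ_pow _ (fun p => if w p then (1 : ℝ) else -1) _),
      Fintype.sum_prod_sign_pow]
    simp only [IsEvenMap, and_iff_right hadj]
    congr!
  · push Not at hadj
    obtain ⟨a, b, hab, hφ⟩ := hadj
    rw [if_neg fun h => h.1 hab hφ]
    refine sum_eq_zero fun w _ => prod_eq_zero (i := s(a, b)) (mem_edgeFinset.2 hab) ?_
    simp [hφ]

lemma expTRand_eq_card_div (n : ℕ) :
    expTRand G n = #{φ : V → Fin n | G.IsEvenMap φ} / (n : ℝ) ^ Fintype.card V := by
  unfold expTRand tRand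
  rw [← sum_div, sum_comm]
  beta_reduce
  rw [sum_congr rfl fun φ _ => sum_prod_edge_sign_eq_ite φ, sum_ite, sum_const_zero, add_zero,
    sum_const, nsmul_eq_mul]
  field_simp

lemma IsEvenMap.embedding_comp_rangeFactorization {φ : V → W} (hφ : G.IsEvenMap φ)
    (ρ : Set.range φ ↪ X) : G.IsEvenMap (ρ ∘ Set.rangeFactorization φ) :=
  hφ.of_forall_eq_iff fun a b => by
    simp only [Function.comp_apply, ρ.injective.eq_iff, Subtype.ext_iff,
      Set.rangeFactorization_coe]

lemma card_image_embedding_comp_rangeFactorization [DecidableEq W] [DecidableEq X] (φ : V → W)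
    (ρ : Set.range φ ↪ X) :
    #(univ.image (ρ ∘ Set.rangeFactorization φ)) = #(univ.image φ) := by
  rw [← image_image, image_univ_of_surjective Set.rangeFactorization_surjective,
    card_image_of_injective _ ρ.injective, card_univ, ← Set.toFinset_card, Set.toFinset_range]

lemma exists_isEvenHom_card_image_eq_pNat
    (hG : ∃ f : G →g (⊤ : SimpleGraph (Fin (Fintype.card V))), IsEvenHom f) :
    ∃ f : G →g (⊤ : SimpleGraph (Fin (Fintype.card V))), IsEvenHom f ∧
      Fintype.card V - #(univ.image ⇑f) = pNat G := by
  obtain ⟨f, hf⟩ := hG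
  exact Nat.sInf_mem (s := {k | ∃ f : G →g (⊤ : SimpleGraph (Fin (Fintype.card V))),
    IsEvenHom f ∧ Fintype.card V - #(univ.image ⇑f) = k}) ⟨_, f, hf, rfl⟩

lemma pNat_le_card_sub_card_image {f : G →g (⊤ : SimpleGraph (Fin (Fintype.card V)))}
    (hf : IsEvenHom f) : pNat G ≤ Fintype.card V - #(univ.image ⇑f) := by
  unfold pNat
  exact Nat.sInf_le ⟨f, hf, rfl⟩

lemma IsEvenMap.card_image_le [DecidableEq W] {φ : V → W} (hφ : G.IsEvenMap φ) :
    #(univ.image φ) ≤ Fintype.card V - pNat G := by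
  have h_range : Fintype.card (Set.range φ) ≤ Fintype.card (Fin (Fintype.card V)) := by
    simpa using Fintype.card_range_le φ
  obtain ⟨ρ⟩ := Function.Embedding.nonempty_of_card_le h_range
  have hψ := hφ.embedding_comp_rangeFactorization ρ
  have h_pNat := pNat_le_card_sub_card_image ((isEvenHom_iff_isEvenMap hψ.toHom).2 hψ)
  rw [coe_toHom, card_image_embedding_comp_rangeFactorization] at h_pNat
  have : #(univ.image φ) ≤ Fintype.card V := Finset.card_image_le.trans_eq card_univ
  omega

lemma card_isEvenMap_le {n : ℕ} (hn : Fintype.card V ≤ n) :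
    #{ψ : V → Fin n | G.IsEvenMap ψ} ≤
      n ^ (Fintype.card V - pNat G) * (Fintype.card V - pNat G) ^ Fintype.card V :=
  (card_le_card fun ψ hψ => mem_filter.2 ⟨mem_univ ψ, (mem_filter.1 hψ).2.card_image_le⟩).trans
    (card_filter_card_image_le (by omega))

lemma IsEvenMap.descFactorial_le_card [DecidableEq W] {φ : V → W} (hφ : G.IsEvenMap φ)
    (n : ℕ) : n.descFactorial #(univ.image φ) ≤ #{ψ : V → Fin n | G.IsEvenMap ψ} := by
  calc n.descFactorial #(univ.image φ) = #(univ : Finset (Set.range φ ↪ Fin n)) := by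
        rw [card_univ, Fintype.card_embedding_eq, Fintype.card_fin, ← Set.toFinset_card,
          Set.toFinset_range]
    _ ≤ #{ψ : V → Fin n | G.IsEvenMap ψ} :=
        card_le_card_of_injOn (fun ρ => ρ ∘ Set.rangeFactorization φ)
          (fun ρ _ => mem_filter.2 ⟨mem_univ _, hφ.embedding_comp_rangeFactorization ρ⟩)
          fun ρ₁ _ ρ₂ _ h => DFunLike.coe_injective
            (Set.rangeFactorization_surjective.injective_comp_right h)

end SimpleGraph

open SimpleGraph

/-- `E(t(G, K_n^{±1})) = Θ(n^{−p(G)})` as `n → ∞`, for any fixed graph `G` admitting an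
even homomorphism into a complete graph. -/
theorem expTRand_theta {V : Type} [Fintype V] (G : SimpleGraph V)
    (hEven : ∃ f : G →g (⊤ : SimpleGraph (Fin (Fintype.card V))), IsEvenHom f) :
    ∃ c C : ℝ, 0 < c ∧ 0 < C ∧ ∃ N : ℕ, ∀ n : ℕ, N ≤ n →
      c * (n : ℝ) ^ (-(pNat G : ℤ)) ≤ expTRand G n ∧
      expTRand G n ≤ C * (n : ℝ) ^ (-(pNat G : ℤ)) := by
  classical
  obtain ⟨f, hf, hf_pNat⟩ := exists_isEvenHom_card_image_eq_pNat hEven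
  have hf_even := (isEvenHom_iff_isEvenMap f).1 hf
  set s := #(univ.image ⇑f)
  have hs : s ≤ Fintype.card V := Finset.card_image_le.trans_eq card_univ
  refine ⟨(1 / 2) ^ s, s ^ Fintype.card V + 1, by positivity, by positivity,
    2 * Fintype.card V + 1, fun n hn => ?_⟩
  have hn_pos : (0 : ℝ) < n := by exact_mod_cast (show 0 < n by omega)
  have h_exp : s + pNat G = Fintype.card V := by omega
  rw [expTRand_eq_card_div, zpow_neg_natCast_eq_pow_div hn_pos.ne' h_exp, ← mul_div_assoc,
    ← mul_div_assoc]
  refine ⟨div_le_div_of_nonneg_right ?_ (by positivity),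
    div_le_div_of_nonneg_right ?_ (by positivity)⟩
  · calc (1 / 2) ^ s * (n : ℝ) ^ s = ((n : ℝ) / 2) ^ s := by ring
      _ ≤ n.descFactorial s := Nat.div_two_pow_le_descFactorial (by omega)
      _ ≤ #{ψ : V → Fin n | G.IsEvenMap ψ} := by exact_mod_cast hf_even.descFactorial_le_card n
  · have h_le := card_isEvenMap_le (G := G) (n := n) (by omega)
    rw [← hf_pNat, Nat.sub_sub_self hs] at h_le
    calc (#{ψ : V → Fin n | G.IsEvenMap ψ} : ℝ) ≤ (n : ℝ) ^ s * s ^ Fintype.card V := by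
          exact_mod_cast h_le
      _ ≤ (s ^ Fintype.card V + 1) * (n : ℝ) ^ s := by nlinarith [pow_pos hn_pos s]
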